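/- Upper bound on the softmax output-layer problem with diagonal quadratic multipliers (Proposition in Appendix, thm:softmax_general): Let l <= u in R^n (componentwise), mu, alpha, beta in R^n. Let t_1 <= t_2 <= ... <= t_N be real numbers with t_1 = min_i mu_i and t_N = max_i mu_i. For j = 1, ..., N-1 define M_j = inf over theta in R of [ max over t in {t_j, t_{j+1}} of ( t + sum_{i=1}^n sup over z in [l_i, u_i] of ((mu_i - t) theta exp(z) - alpha_i z - beta_i z^2) ) ]. Then sup over x with l <= x <= u of [ (sum_i mu_i exp(x_i)) / (sum_i exp(x_i)) - sum_i (alpha_i x_i + beta_i x_i^2) ] <= max over j in {1, ..., N-1} of M_j. -/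

import Mathlib

/-!
Fix `x ∈ [l, u]` and let `T = μᵀ softmax(x)`, the mean of `μ` under the weights `exp (xᵢ)`, so
`T ∈ [min μ, max μ] = [t₀, t_{N-1}]` and hence `T ∈ [t_j, t_{j+1}]` for some `j`. For every `θ`,
the function `s ↦ s + ∑ᵢ ((μᵢ - s) θ exp (xᵢ) - αᵢ xᵢ - βᵢ xᵢ²)` is affine in `s` and equals the
objective at `s = T`, because `∑ᵢ (μᵢ - T) exp (xᵢ) = 0`. So the objective is at most the larger
of its values at `t_j` and `t_{j+1}`, and each of these is bounded by replacing `xᵢ` with the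
supremum over `zᵢ ∈ [lᵢ, uᵢ]`.
-/

open Finset Set Real

theorem EReal.coe_finset_sum {ι : Type*} (s : Finset ι) (f : ι → ℝ) :
    ((∑ i ∈ s, f i : ℝ) : EReal) = ∑ i ∈ s, (f i : EReal) :=
  map_sum (⟨⟨Real.toEReal, EReal.coe_zero⟩, EReal.coe_add⟩ : ℝ →+ EReal) f s

theorem exists_le_mem_Icc_succ {α : Type*} [LinearOrder α] (t : ℕ → α) {T : α} :
    ∀ {m : ℕ}, T ∈ Icc (t 0) (t (m + 1)) → ∃ j ≤ m, T ∈ Icc (t j) (t (j + 1))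
  | 0, hT => ⟨0, le_rfl, hT⟩
  | m + 1, hT => by
    rcases le_total (t (m + 1)) T with h | h
    · exact ⟨m + 1, le_rfl, h, hT.2⟩
    · obtain ⟨j, hj, hTj⟩ := exists_le_mem_Icc_succ t ⟨hT.1, h⟩
      exact ⟨j, hj.trans m.le_succ, hTj⟩

theorem affine_le_max_of_mem_Icc {a b c d s : ℝ} (hs : s ∈ Icc a b) :
    c * s + d ≤ max (c * a + d) (c * b + d) := by
  rcases le_total 0 c with hc | hc
  · exact le_max_of_le_right (by nlinarith [hs.2])
  · exact le_max_of_le_left (by nlinarith [hs.1])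

section Softmax

variable {ι : Type*} [Fintype ι]

theorem sum_mul_exp_div_sum_exp_mem_Icc [Nonempty ι] (μ x : ι → ℝ) :
    (∑ i, μ i * exp (x i)) / ∑ i, exp (x i) ∈
      Icc (univ.inf' univ_nonempty μ) (univ.sup' univ_nonempty μ) := by
  have hw₀ : ∀ i ∈ (univ : Finset ι), 0 ≤ exp (x i) := fun i _ => (exp_pos _).le
  have hw₁ : 0 < ∑ i, exp (x i) := sum_pos (fun i _ => exp_pos _) univ_nonempty
  have hmass : univ.centerMass (fun i => exp (x i)) μ =
      (∑ i, μ i * exp (x i)) / ∑ i, exp (x i) := by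
    simp only [centerMass, smul_eq_mul, div_eq_inv_mul, mul_comm (exp _)]
  rw [← hmass]
  exact ⟨inf_le_centerMass hw₀ hw₁, centerMass_le_sup hw₀ hw₁⟩

/-- The objective at `x` with the constraint `s ∑ᵢ exp (xᵢ) = ∑ᵢ μᵢ exp (xᵢ)` dualized by `θ`. -/
noncomputable def softmaxLagrangian (μ α β x : ι → ℝ) (θ s : ℝ) : ℝ :=
  s + ∑ i, ((μ i - s) * θ * exp (x i) - α i * x i - β i * x i ^ 2)

variable (μ α β x : ι → ℝ) (θ : ℝ)

theorem softmaxLagrangian_eq (s : ℝ) :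
    softmaxLagrangian μ α β x θ s = (1 - θ * ∑ i, exp (x i)) * s
      + (θ * ∑ i, μ i * exp (x i) - ∑ i, (α i * x i + β i * x i ^ 2)) := by
  have hsum : ∑ i, ((μ i - s) * θ * exp (x i) - α i * x i - β i * x i ^ 2) =
      θ * ∑ i, μ i * exp (x i) - s * θ * ∑ i, exp (x i) - ∑ i, (α i * x i + β i * x i ^ 2) := by
    rw [mul_sum, mul_sum, ← sum_sub_distrib, ← sum_sub_distrib]
    exact sum_congr rfl fun i _ => by ring
  rw [softmaxLagrangian, hsum]
  ring

theorem softmaxLagrangian_sum_mul_exp_div_sum_exp [Nonempty ι] :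
    softmaxLagrangian μ α β x θ ((∑ i, μ i * exp (x i)) / ∑ i, exp (x i)) =
      (∑ i, μ i * exp (x i)) / ∑ i, exp (x i) - ∑ i, (α i * x i + β i * x i ^ 2) := by
  have hD : ∑ i, exp (x i) ≠ 0 := (sum_pos (fun i _ => exp_pos _) univ_nonempty).ne'
  rw [softmaxLagrangian_eq]
  field_simp
  ring

variable {μ α β x θ}

theorem softmaxLagrangian_le_max {a b s : ℝ} (hs : s ∈ Icc a b) :
    softmaxLagrangian μ α β x θ s ≤
      max (softmaxLagrangian μ α β x θ a) (softmaxLagrangian μ α β x θ b) := by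
  simp only [softmaxLagrangian_eq]
  exact affine_le_max_of_mem_Icc hs

theorem coe_softmaxLagrangian_le {l u : ι → ℝ} (hx : x ∈ Icc l u) (s : ℝ) :
    (softmaxLagrangian μ α β x θ s : EReal) ≤ (s : EReal) + ∑ i, ⨆ z ∈ Icc (l i) (u i),
      (((μ i - s) * θ * exp z - α i * z - β i * z ^ 2 : ℝ) : EReal) := by
  rw [softmaxLagrangian, EReal.coe_add, EReal.coe_finset_sum]
  gcongr with i
  exact le_iSup₂_of_le (x i) ⟨hx.1 i, hx.2 i⟩ le_rfl

end Softmax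

theorem softmax_quadratic_multiplier_bound_general
    (n : ℕ) (hn : 0 < n) (l u μ α β : Fin n → ℝ)
    (N : ℕ) (hN : 2 ≤ N) (t : ℕ → ℝ)
    (ht0 : t 0 = Finset.univ.inf' (Finset.univ_nonempty_iff.mpr ⟨⟨0, hn⟩⟩) μ)
    (htN : t (N - 1) = Finset.univ.sup' (Finset.univ_nonempty_iff.mpr ⟨⟨0, hn⟩⟩) μ) :
    (⨆ x ∈ Set.Icc l u,
        (((∑ i, μ i * Real.exp (x i)) / (∑ i, Real.exp (x i))
            - ∑ i, (α i * x i + β i * x i ^ 2) : ℝ) : EReal)) ≤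
      ⨆ j ∈ Finset.range (N - 1),
        ⨅ θ : ℝ,
          max
            (((t j : ℝ) : EReal) + ∑ i, ⨆ z ∈ Set.Icc (l i) (u i),
              (((μ i - t j) * θ * Real.exp z - α i * z - β i * z ^ 2 : ℝ) : EReal))
            (((t (j + 1) : ℝ) : EReal) + ∑ i, ⨆ z ∈ Set.Icc (l i) (u i),
              (((μ i - t (j + 1)) * θ * Real.exp z - α i * z - β i * z ^ 2 : ℝ) :
                EReal)) := by
  have : Nonempty (Fin n) := ⟨⟨0, hn⟩⟩
  refine iSup₂_le fun x hx => ?_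
  have hT : (∑ i, μ i * exp (x i)) / ∑ i, exp (x i) ∈ Icc (t 0) (t (N - 2 + 1)) := by
    rw [show N - 2 + 1 = N - 1 by omega, ht0, htN]
    exact sum_mul_exp_div_sum_exp_mem_Icc μ x
  obtain ⟨j, hj, hTj⟩ := exists_le_mem_Icc_succ t hT
  refine le_iSup₂_of_le j (mem_range.2 (by omega)) (le_iInf fun θ => ?_)
  rw [← softmaxLagrangian_sum_mul_exp_div_sum_exp μ α β x θ]
  calc (softmaxLagrangian μ α β x θ _ : EReal)
      ≤ max (softmaxLagrangian μ α β x θ (t j) : EReal)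
          (softmaxLagrangian μ α β x θ (t (j + 1))) :=
        EReal.coe_strictMono.monotone.map_max ▸
          EReal.coe_le_coe_iff.2 (softmaxLagrangian_le_max hTj)
    _ ≤ _ := max_le_max (coe_softmaxLagrangian_le hx _) (coe_softmaxLagrangian_le hx _)

/-- Upper bound on the softmax output-layer problem with diagonal quadratic
multipliers (Proposition thm:softmax_general):
`sup_{l ≤ x ≤ u} μᵀ softmax(x) - ∑ᵢ (αᵢ xᵢ + βᵢ xᵢ²) ≤ max_j M_j` where
`M_j = inf_θ max_{t ∈ {t_j, t_{j+1}}} (t + ∑ᵢ sup_{z ∈ [lᵢ, uᵢ]}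
((μᵢ - t) θ exp(z) - αᵢ z - βᵢ z²))`. -/
theorem softmax_quadratic_multiplier_bound
    (n : ℕ) (hn : 0 < n) (l u μ α β : Fin n → ℝ) (hlu : l ≤ u)
    (N : ℕ) (hN : 2 ≤ N) (t : ℕ → ℝ)
    (hmono : ∀ i j, i ≤ j → j < N → t i ≤ t j)
    (ht0 : t 0 = Finset.univ.inf' (Finset.univ_nonempty_iff.mpr ⟨⟨0, hn⟩⟩) μ)
    (htN : t (N - 1) = Finset.univ.sup' (Finset.univ_nonempty_iff.mpr ⟨⟨0, hn⟩⟩) μ) :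
    (⨆ x ∈ Set.Icc l u,
        (((∑ i, μ i * Real.exp (x i)) / (∑ i, Real.exp (x i))
            - ∑ i, (α i * x i + β i * x i ^ 2) : ℝ) : EReal)) ≤
      ⨆ j ∈ Finset.range (N - 1),
        ⨅ θ : ℝ,
          max
            (((t j : ℝ) : EReal) + ∑ i, ⨆ z ∈ Set.Icc (l i) (u i),
              (((μ i - t j) * θ * Real.exp z - α i * z - β i * z ^ 2 : ℝ) : EReal))
            (((t (j + 1) : ℝ) : EReal) + ∑ i, ⨆ z ∈ Set.Icc (l i) (u i),
              (((μ i - t (j + 1)) * θ * Real.exp z - α i * z - β i * z ^ 2 : ℝ) :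
                EReal)) :=
  softmax_quadratic_multiplier_bound_general n hn l u μ α β N hN t ht0 htN
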